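/- arXiv:2001.06591 — 8 statements merged into one kernel-verified Lean document; each statement's English description precedes it below -/
import Mathlib

section
/- Let I be a finite nonempty index set and let q, t, p : I → ℝ satisfy q i > 0, t i > 0 and p i ≥ 0 for all i ∈ I. Set s i = q i + t i + p i. Then for every function D : I → ℝ with 0 < D i < 1 for all i, one has Σ_{i∈I} q i · log(D i) + Σ_{i∈I} (t i + p i) · log(1 − D i) ≤ Σ_{i∈I} q i · log(q i / s i) + Σ_{i∈I} (t i + p i) · log((t i + p i)/ s i), with equality if and only if D i = q i / s i for all i ∈ I. In other words, the objective V(D) = Σ q i log D i + Σ (t i + p i) log(1 − D i) is uniquely maximized by the discriminator D* i = q i/(q i + t i + p i). -/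
/-!
Pointwise, with `a = q i`, `b = t i + p i`, `c = a + b`, the gap
`a log x + b log (1 - x) - a log (a / c) - b log (b / c)` splits as
`(a log (y / a) - (y - a)) + (b log (z / b) - (z - b))` with `y = x c`, `z = (1 - x) c`,
because `(y - a) + (z - b) = 0`. Both terms are `≤ 0` by `log u ≤ u - 1`, with equality
exactly when `y = a`, i.e. `x = a / c`. Summing over `i` gives the theorem.
-/

open Real Finset

namespace Real

theorem mul_log_div_le_sub {a y : ℝ} (ha : 0 < a) (hy : 0 < y) : a * log (y / a) ≤ y - a := by
  have h := log_le_sub_one_of_pos (div_pos hy ha)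
  calc a * log (y / a) ≤ a * (y / a - 1) := by gcongr
    _ = y - a := by field_simp

theorem mul_log_div_lt_sub {a y : ℝ} (ha : 0 < a) (hy : 0 < y) (hne : y ≠ a) :
    a * log (y / a) < y - a := by
  have h := log_lt_sub_one_of_pos (div_pos hy ha) (by rwa [ne_eq, div_eq_one_iff_eq ha.ne'])
  calc a * log (y / a) < a * (y / a - 1) := by gcongr
    _ = y - a := by field_simp

theorem mul_log_div_eq_sub_iff {a y : ℝ} (ha : 0 < a) (hy : 0 < y) :
    a * log (y / a) = y - a ↔ y = a := by
  refine ⟨fun h => ?_, fun h => by simp [h, ha.ne']⟩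
  by_contra hne
  exact (mul_log_div_lt_sub ha hy hne).ne h

section Binary

variable {a b x : ℝ}

theorem mul_log_add_mul_log_one_sub_sub_eq (ha : 0 < a) (hb : 0 < b) (hx0 : 0 < x)
    (hx1 : x < 1) :
    a * log x + b * log (1 - x) - (a * log (a / (a + b)) + b * log (b / (a + b))) =
      (a * log (x * (a + b) / a) - (x * (a + b) - a)) +
        (b * log ((1 - x) * (a + b) / b) - ((1 - x) * (a + b) - b)) := by
  have hc : 0 < a + b := by positivity
  have h1x : 0 < 1 - x := by linarith
  rw [log_div (by positivity) ha.ne', log_div (by positivity) hb.ne', log_div ha.ne' hc.ne',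
    log_div hb.ne' hc.ne', log_mul hx0.ne' hc.ne', log_mul h1x.ne' hc.ne']
  ring

theorem mul_log_add_mul_log_one_sub_le (ha : 0 < a) (hb : 0 < b) (hx0 : 0 < x) (hx1 : x < 1) :
    a * log x + b * log (1 - x) ≤ a * log (a / (a + b)) + b * log (b / (a + b)) := by
  have hc : 0 < a + b := by positivity
  have h1x : 0 < 1 - x := by linarith
  have hgap := mul_log_add_mul_log_one_sub_sub_eq ha hb hx0 hx1
  have hy := mul_log_div_le_sub ha (by positivity : 0 < x * (a + b))
  have hz := mul_log_div_le_sub hb (by positivity : 0 < (1 - x) * (a + b))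
  linarith

theorem mul_log_add_mul_log_one_sub_eq_iff (ha : 0 < a) (hb : 0 < b) (hx0 : 0 < x)
    (hx1 : x < 1) :
    a * log x + b * log (1 - x) = a * log (a / (a + b)) + b * log (b / (a + b)) ↔
      x = a / (a + b) := by
  have hc : 0 < a + b := by positivity
  have h1x : 0 < 1 - x := by linarith
  have hgap := mul_log_add_mul_log_one_sub_sub_eq ha hb hx0 hx1
  rw [eq_div_iff hc.ne']
  constructor
  · intro h
    have hy := mul_log_div_le_sub ha (by positivity : 0 < x * (a + b))
    have hz := mul_log_div_le_sub hb (by positivity : 0 < (1 - x) * (a + b))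
    rw [← mul_log_div_eq_sub_iff ha (by positivity)]
    linarith
  · intro h
    have hy := (mul_log_div_eq_sub_iff ha (by positivity)).2 h
    have hz := (mul_log_div_eq_sub_iff hb (by positivity)).2 (by linarith : (1 - x) * (a + b) = b)
    linarith

end Binary

end Real

theorem optimal_discriminator_general {I : Type*} [Fintype I]
    (q t p : I → ℝ) (hq : ∀ i, 0 < q i) (ht : ∀ i, 0 < t i) (hp : ∀ i, 0 ≤ p i)
    (s : I → ℝ) (hs : ∀ i, s i = q i + t i + p i) :
    ∀ D : I → ℝ, (∀ i, 0 < D i) → (∀ i, D i < 1) →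
      ((∑ i, q i * Real.log (D i)) + ∑ i, (t i + p i) * Real.log (1 - D i) ≤
        (∑ i, q i * Real.log (q i / s i)) +
          ∑ i, (t i + p i) * Real.log ((t i + p i) / s i)) ∧
      ((∑ i, q i * Real.log (D i)) + (∑ i, (t i + p i) * Real.log (1 - D i)) =
        (∑ i, q i * Real.log (q i / s i)) +
          (∑ i, (t i + p i) * Real.log ((t i + p i) / s i)) ↔
        ∀ i, D i = q i / s i) := by
  intro D hD0 hD1
  obtain rfl : s = fun i => q i + (t i + p i) := funext fun i => by rw [hs i, add_assoc]
  have htp i : 0 < t i + p i := add_pos_of_pos_of_nonneg (ht i) (hp i)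
  have hle : ∀ i ∈ univ, q i * log (D i) + (t i + p i) * log (1 - D i) ≤
      q i * log (q i / (q i + (t i + p i))) +
        (t i + p i) * log ((t i + p i) / (q i + (t i + p i))) := fun i _ =>
    mul_log_add_mul_log_one_sub_le (hq i) (htp i) (hD0 i) (hD1 i)
  simp only [← sum_add_distrib]
  refine ⟨sum_le_sum hle, ?_⟩
  rw [sum_eq_sum_iff_of_le hle]
  simp only [mem_univ, forall_const,
    fun i => mul_log_add_mul_log_one_sub_eq_iff (hq i) (htp i) (hD0 i) (hD1 i)]

/-- Discrete form of Proposition 1: with `q i > 0`, `t i > 0`, `p i ≥ 0` and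
`s i = q i + t i + p i`, the objective
`V(D) = Σ q i·log (D i) + Σ (t i + p i)·log (1 − D i)` over discriminators
`0 < D i < 1` is bounded by its value at `D* i = q i / s i`, with equality
iff `D = D*`. -/
theorem optimal_discriminator {I : Type*} [Fintype I] [Nonempty I]
    (q t p : I → ℝ) (hq : ∀ i, 0 < q i) (ht : ∀ i, 0 < t i) (hp : ∀ i, 0 ≤ p i)
    (s : I → ℝ) (hs : ∀ i, s i = q i + t i + p i) :
    ∀ D : I → ℝ, (∀ i, 0 < D i) → (∀ i, D i < 1) →
      ((∑ i, q i * Real.log (D i)) + ∑ i, (t i + p i) * Real.log (1 - D i) ≤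
        (∑ i, q i * Real.log (q i / s i)) +
          ∑ i, (t i + p i) * Real.log ((t i + p i) / s i)) ∧
      ((∑ i, q i * Real.log (D i)) + (∑ i, (t i + p i) * Real.log (1 - D i)) =
        (∑ i, q i * Real.log (q i / s i)) +
          (∑ i, (t i + p i) * Real.log ((t i + p i) / s i)) ↔
        ∀ i, D i = q i / s i) :=
  optimal_discriminator_general q t p hq ht hp s hs
end

section
/- Let I be a finite nonempty index set and let q, t : I → ℝ satisfy q i ≥ 0 and t i ≥ 0 for all i ∈ I. Define F on the set {p : I → ℝ | ∀ i, p i ≥ 0} by F(p) = Σ_{i∈I} (t i + p i)·log(t i + p i) − Σ_{i∈I} (t i + p i + q i)·log(t i + p i + q i), with the convention 0·log 0 = 0. Then F is a convex function of p on this set: for all p, p' with nonnegative entries and all λ ∈ [0,1], F(λ·p + (1−λ)·p') ≤ λ·F(p) + (1−λ)·F(p'). -/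
/-!
`F` is a sum over coordinates of `φ_{q i} (t i + p i)` with
`φ_c y = y log y - (y + c) log (y + c)`. For `c ≥ 0` the derivative `log (y / (y + c))` of `φ_c`
increases on `(0, ∞)`, so each `φ_c` is convex on `[0, ∞)`, and a coordinatewise sum of convex
functions is convex on the product of their domains.
-/

open Real Finset

lemma Real.hasDerivAt_mul_log_sub_mul_log_add {c y : ℝ} (hy : y ≠ 0) (hyc : y + c ≠ 0) :
    HasDerivAt (fun y => y * log y - (y + c) * log (y + c)) (log y - log (y + c)) y := by
  have h := (hasDerivAt_mul_log hy).sub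
    ((hasDerivAt_mul_log hyc).comp y ((hasDerivAt_id y).add_const c))
  exact h.congr_deriv (by ring)

lemma Real.monotoneOn_log_sub_log_add {c : ℝ} (hc : 0 ≤ c) :
    MonotoneOn (fun y => log y - log (y + c)) (Set.Ioi 0) := by
  intro a (ha : 0 < a) b (hb : 0 < b) hab
  have hcross : log (a * (b + c)) ≤ log (b * (a + c)) :=
    log_le_log (by positivity) (by nlinarith)
  rw [log_mul ha.ne' (by positivity), log_mul hb.ne' (by positivity)] at hcross
  dsimp only
  linarith

lemma Real.convexOn_mul_log_sub_mul_log_add {c : ℝ} (hc : 0 ≤ c) :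
    ConvexOn ℝ (Set.Ici 0) (fun y => y * log y - (y + c) * log (y + c)) := by
  have hderiv : ∀ y ∈ Set.Ioi (0 : ℝ), HasDerivAt (fun y => y * log y - (y + c) * log (y + c))
      (log y - log (y + c)) y := fun y (hy : 0 < y) =>
    hasDerivAt_mul_log_sub_mul_log_add hy.ne' (by positivity)
  refine MonotoneOn.convexOn_of_deriv (convex_Ici 0) ?_ ?_ ?_
  · exact (continuous_mul_log.sub
      (continuous_mul_log.comp (continuous_id.add continuous_const))).continuousOn
  · rw [interior_Ici]
    exact fun y hy => (hderiv y hy).differentiableAt.differentiableWithinAt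
  · rw [interior_Ici]
    exact (monotoneOn_log_sub_log_add hc).congr fun y hy => ((hderiv y hy).deriv).symm

lemma convexOn_univ_pi_sum {𝕜 ι : Type*} {E : ι → Type*} [Field 𝕜] [LinearOrder 𝕜]
    [IsStrictOrderedRing 𝕜] [Fintype ι] [∀ i, AddCommMonoid (E i)] [∀ i, Module 𝕜 (E i)]
    {s : ∀ i, Set (E i)} {g : ∀ i, E i → 𝕜} (hg : ∀ i, ConvexOn 𝕜 (s i) (g i)) :
    ConvexOn 𝕜 (Set.univ.pi s) (fun p => ∑ i, g i (p i)) := by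
  refine ⟨convex_pi fun i _ => (hg i).1, fun x hx y hy a b ha hb hab => ?_⟩
  simp only [Set.mem_univ_pi] at hx hy
  simp only [Pi.add_apply, Pi.smul_apply, smul_eq_mul, mul_sum, ← sum_add_distrib]
  exact sum_le_sum fun i _ => (hg i).2 (hx i) (hy i) ha hb hab

theorem F_convex_general {I : Type*} [Fintype I]
    (q t : I → ℝ) (hq : ∀ i, 0 ≤ q i) (ht : ∀ i, 0 ≤ t i)
    (F : (I → ℝ) → ℝ)
    (hF : ∀ p : I → ℝ, F p =
      (∑ i, (t i + p i) * Real.log (t i + p i)) -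
        ∑ i, (t i + p i + q i) * Real.log (t i + p i + q i)) :
    ∀ p p' : I → ℝ, (∀ i, 0 ≤ p i) → (∀ i, 0 ≤ p' i) →
      ∀ lam : ℝ, 0 ≤ lam → lam ≤ 1 →
        F (fun i => lam * p i + (1 - lam) * p' i) ≤ lam * F p + (1 - lam) * F p' := by
  intro p p' hp hp' lam hl0 hl1
  have hconv : ConvexOn ℝ (Set.univ.pi fun _ => Set.Ici 0) fun p : I → ℝ =>
      ∑ i, ((t i + p i) * log (t i + p i) - (t i + p i + q i) * log (t i + p i + q i)) :=
    convexOn_univ_pi_sum fun i =>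
      ((convexOn_mul_log_sub_mul_log_add (hq i)).translate_right (t i)).subset
        (fun y (hy : 0 ≤ y) => show 0 ≤ t i + y by linarith [ht i]) (convex_Ici 0)
  simpa only [hF, ← sum_sub_distrib, Pi.add_apply, Pi.smul_apply, smul_eq_mul] using
    hconv.2 (Set.mem_univ_pi.2 hp) (Set.mem_univ_pi.2 hp') hl0 (sub_nonneg.2 hl1)
      (add_sub_cancel lam 1)

/-- Convexity of the RCGAN objective at the optimal discriminator as a function of
the generator distribution `p`:
`F(p) = Σ (t i + p i)·log (t i + p i) − Σ (t i + p i + q i)·log (t i + p i + q i)`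
(with the convention `0·log 0 = 0`, which `Real.log 0 = 0` realizes) is convex on
the set of componentwise-nonnegative `p`. -/
theorem F_convex {I : Type*} [Fintype I] [Nonempty I]
    (q t : I → ℝ) (hq : ∀ i, 0 ≤ q i) (ht : ∀ i, 0 ≤ t i)
    (F : (I → ℝ) → ℝ)
    (hF : ∀ p : I → ℝ, F p =
      (∑ i, (t i + p i) * Real.log (t i + p i)) -
        ∑ i, (t i + p i + q i) * Real.log (t i + p i + q i)) :
    ∀ p p' : I → ℝ, (∀ i, 0 ≤ p i) → (∀ i, 0 ≤ p' i) →
      ∀ lam : ℝ, 0 ≤ lam → lam ≤ 1 →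
        F (fun i => lam * p i + (1 - lam) * p' i) ≤ lam * F p + (1 - lam) * F p' :=
  F_convex_general q t hq ht F hF
end

section
/- Let I be a finite nonempty index set and let q, t : I → ℝ be probability mass functions (q i ≥ 0, t i ≥ 0 for all i, and Σ_{i∈I} q i = Σ_{i∈I} t i = 1). Define Sp(β) = Σ_{i∈I} max(0, β·q i − t i) for β ∈ ℝ. Then there exists a unique real number β with Sp(β) = 1, and this β satisfies 1 ≤ β ≤ 2. -/
/-!
`β ↦ ∑ i, max 0 (β * q i - t i)` is continuous, at most `∑ q = 1` at `β = 1` and at least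
`2 ∑ q - ∑ t = 1` at `β = 2`, so it takes the value `1` on `[1, 2]`. Wherever it is positive some
term `β * q i - t i` is positive, which forces `q i > 0`, so the function is strictly increasing
there; hence the level `1` is attained only once.
-/

open Finset

section PosPartMass

variable {I : Type*} [Fintype I] (q t : I → ℝ)

noncomputable def posPartMass (β : ℝ) : ℝ := ∑ i, max 0 (β * q i - t i)

theorem continuous_posPartMass : Continuous (posPartMass q t) :=
  continuous_finsetSum _ fun _ _ => continuous_const.max (by fun_prop)

theorem sum_mul_sub_sum_le_posPartMass (β : ℝ) :
    β * ∑ i, q i - ∑ i, t i ≤ posPartMass q t β := by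
  rw [mul_sum, ← sum_sub_distrib]
  exact sum_le_sum fun _ _ => le_max_right _ _

variable {q t}

theorem posPartMass_le_mul_sum (hq : ∀ i, 0 ≤ q i) (ht : ∀ i, 0 ≤ t i) {β : ℝ} (hβ : 0 ≤ β) :
    posPartMass q t β ≤ β * ∑ i, q i := by
  rw [mul_sum]
  exact sum_le_sum fun i _ => max_le (mul_nonneg hβ (hq i)) (by linarith [ht i])

theorem strictMonoOn_posPartMass (hq : ∀ i, 0 ≤ q i) (ht : ∀ i, 0 ≤ t i) :
    StrictMonoOn (posPartMass q t) {β | 0 < posPartMass q t β} := by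
  intro a ha b _ hab
  obtain ⟨i, -, hi⟩ := exists_lt_of_sum_lt (by simpa [posPartMass] using ha : ∑ _i : I, (0 : ℝ) < _)
  have hai : 0 < a * q i - t i := by simpa using hi
  have hqi : 0 < q i := by
    refine (hq i).lt_of_ne fun h => ?_
    rw [← h, mul_zero] at hai
    linarith [ht i]
  refine sum_lt_sum (fun j _ => max_le_max le_rfl ?_) ⟨i, mem_univ i, ?_⟩
  · nlinarith [hq j]
  · rw [max_eq_right hai.le]
    exact (by nlinarith : a * q i - t i < b * q i - t i).trans_le (le_max_right _ _)

end PosPartMass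

theorem beta_exists_unique_general {I : Type*} [Fintype I]
    (q t : I → ℝ) (hq : ∀ i, 0 ≤ q i) (ht : ∀ i, 0 ≤ t i)
    (hqs : ∑ i, q i = 1) (hts : ∑ i, t i = 1)
    (Sp : ℝ → ℝ) (hSp : ∀ β : ℝ, Sp β = ∑ i, max 0 (β * q i - t i)) :
    (∃! β : ℝ, Sp β = 1) ∧ ∀ β : ℝ, Sp β = 1 → 1 ≤ β ∧ β ≤ 2 := by
  obtain rfl : Sp = posPartMass q t := funext hSp
  have h₁ : posPartMass q t 1 ≤ 1 := by
    simpa [hqs] using posPartMass_le_mul_sum hq ht zero_le_one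
  have h₂ : 1 ≤ posPartMass q t 2 := by
    have := sum_mul_sub_sum_le_posPartMass q t 2
    rw [hqs, hts] at this
    linarith
  obtain ⟨β₀, hβ₀, hβ₀_eq⟩ := intermediate_value_Icc one_le_two
    (continuous_posPartMass q t).continuousOn ⟨h₁, h₂⟩
  have huniq : ∀ β, posPartMass q t β = 1 → β = β₀ := fun β hβ =>
    (strictMonoOn_posPartMass hq ht).injOn (by simp [hβ]) (by simp [hβ₀_eq]) (hβ.trans hβ₀_eq.symm)
  exact ⟨⟨β₀, hβ₀_eq, huniq⟩, fun β hβ => huniq β hβ ▸ hβ₀⟩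

/-- Existence, uniqueness and the bounds `1 ≤ β ≤ 2` for the constant `β` of
Theorem 1: for probability mass functions `q`, `t`, there is a unique real `β`
with `Σ max(0, β·q i − t i) = 1`, and that `β` lies in `[1, 2]`. -/
theorem beta_exists_unique {I : Type*} [Fintype I] [Nonempty I]
    (q t : I → ℝ) (hq : ∀ i, 0 ≤ q i) (ht : ∀ i, 0 ≤ t i)
    (hqs : ∑ i, q i = 1) (hts : ∑ i, t i = 1)
    (Sp : ℝ → ℝ) (hSp : ∀ β : ℝ, Sp β = ∑ i, max 0 (β * q i - t i)) :
    (∃! β : ℝ, Sp β = 1) ∧ ∀ β : ℝ, Sp β = 1 → 1 ≤ β ∧ β ≤ 2 :=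
  beta_exists_unique_general q t hq ht hqs hts Sp hSp
end

section
/- Let I be a finite nonempty index set and let q, t : I → ℝ be probability mass functions (q i ≥ 0, t i ≥ 0 for all i, and Σ_{i∈I} q i = Σ_{i∈I} t i = 1). Define Sp(β) = Σ_{i∈I} max(0, β·q i − t i) for β ∈ ℝ, let β* be the unique real number with Sp(β*) = 1, and define p* : I → ℝ by p* i = max(0, β*·q i − t i). Define F(p) = Σ_{i∈I} (t i + p i)·log(t i + p i) − Σ_{i∈I} (t i + p i + q i)·log(t i + p i + q i), with the convention 0·log 0 = 0. Then p* i ≥ 0 for all i, Σ_{i∈I} p* i = 1, and for every p : I → ℝ with p i ≥ 0 for all i and Σ_{i∈I} p i = 1, one has F(p*) ≤ F(p). That is, p* minimizes F over all probability mass functions on I. -/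
/-!
`F p = ∑ i, objTerm (q i) (t i + p i)`, and `objTerm q` is convex on `[0, ∞)` with slope
`log (z / (z + q))` at `z > 0`; its tangent-line inequality is the two-term log-sum inequality.
At `y i = t i + p* i = max (t i) (β* q i)` the slope equals `c = log (β* / (β* + 1))` where
`p* i > 0` and is at least `c` where `p* i = 0`: these are the KKT conditions with multiplier `c`.
Summing the tangent-line inequalities at `y` and using `∑ p i = ∑ p* i` gives `F p* ≤ F p`.
-/

open Real Finset

theorem mul_log_add_div_add_le {a₁ a₂ b₁ b₂ : ℝ} (ha₁ : 0 ≤ a₁) (ha₂ : 0 ≤ a₂)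
    (hb₁ : 0 < b₁) (hb₂ : 0 < b₂) :
    (a₁ + a₂) * log ((a₁ + a₂) / (b₁ + b₂)) ≤ a₁ * log (a₁ / b₁) + a₂ * log (a₂ / b₂) := by
  have hB : 0 < b₁ + b₂ := by positivity
  have hconv := convexOn_mul_log.2 (Set.mem_Ici.2 (div_nonneg ha₁ hb₁.le))
    (Set.mem_Ici.2 (div_nonneg ha₂ hb₂.le)) (div_nonneg hb₁.le hB.le)
    (div_nonneg hb₂.le hB.le) (by field_simp)
  have hmid : b₁ / (b₁ + b₂) * (a₁ / b₁) + b₂ / (b₁ + b₂) * (a₂ / b₂) =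
      (a₁ + a₂) / (b₁ + b₂) := by
    field_simp
  simp only [smul_eq_mul, hmid] at hconv
  calc (a₁ + a₂) * log ((a₁ + a₂) / (b₁ + b₂))
      = (b₁ + b₂) * ((a₁ + a₂) / (b₁ + b₂) * log ((a₁ + a₂) / (b₁ + b₂))) := by
        field_simp
    _ ≤ (b₁ + b₂) * (b₁ / (b₁ + b₂) * (a₁ / b₁ * log (a₁ / b₁)) +
          b₂ / (b₁ + b₂) * (a₂ / b₂ * log (a₂ / b₂))) := by gcongr
    _ = a₁ * log (a₁ / b₁) + a₂ * log (a₂ / b₂) := by field_simp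

theorem mul_log_div_eq (x : ℝ) {y : ℝ} (hy : y ≠ 0) :
    x * log (x / y) = x * (log x - log y) := by
  rcases eq_or_ne x 0 with rfl | hx
  · simp
  · rw [log_div hx hy]

noncomputable def objTerm (q z : ℝ) : ℝ := z * log z - (z + q) * log (z + q)

theorem objTerm_add_mul_sub_le {q x y : ℝ} (hq : 0 ≤ q) (hx : 0 ≤ x) (hy : 0 < y) :
    objTerm q y + (log y - log (y + q)) * (x - y) ≤ objTerm q x := by
  rcases hq.eq_or_lt with rfl | hq
  · simp [objTerm]
  have hlogsum := mul_log_add_div_add_le hx hq.le hy hq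
  rw [div_self hq.ne', log_one, mul_zero, add_zero, mul_log_div_eq _ hy.ne',
    mul_log_div_eq _ (by positivity : y + q ≠ 0)] at hlogsum
  unfold objTerm
  linarith

theorem log_sub_log_add_le_log_sub_log_add {q y y' : ℝ} (hq : 0 ≤ q) (hy : 0 < y)
    (hyy' : y ≤ y') : log y - log (y + q) ≤ log y' - log (y' + q) := by
  have hy' : 0 < y' := hy.trans_le hyy'
  have hmul := log_le_log (by positivity : 0 < y * (y' + q))
    (by nlinarith : y * (y' + q) ≤ y' * (y + q))
  rw [log_mul hy.ne' (by positivity), log_mul (by positivity) (by positivity)] at hmul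
  linarith

theorem log_mul_sub_log_mul_add {β q : ℝ} (hβ : 0 < β) (hq : 0 < q) :
    log (β * q) - log (β * q + q) = log β - log (β + 1) := by
  rw [show β * q + q = (β + 1) * q by ring, log_mul hβ.ne' hq.ne',
    log_mul (by positivity) hq.ne']
  ring

theorem objTerm_max_add_mul_sub_le {β q t x : ℝ} (hβ : 0 < β) (hq : 0 ≤ q) (ht : 0 ≤ t)
    (hx : t ≤ x) :
    objTerm q (max t (β * q)) + (log β - log (β + 1)) * (x - max t (β * q)) ≤
      objTerm q x := by
  rcases hq.eq_or_lt with rfl | hq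
  · have hc : log β - log (β + 1) ≤ 0 := sub_nonpos.2 (log_le_log hβ (by linarith))
    simp only [objTerm, add_zero, sub_self, mul_zero, max_eq_left ht, zero_add]
    exact mul_nonpos_of_nonpos_of_nonneg hc (sub_nonneg.2 hx)
  rcases le_total (β * q) t with hle | hle
  · have hslope := log_sub_log_add_le_log_sub_log_add hq.le (by positivity) hle
    rw [log_mul_sub_log_mul_add hβ hq] at hslope
    rw [max_eq_left hle]
    linarith [objTerm_add_mul_sub_le hq.le (ht.trans hx) (hle.trans_lt' (by positivity)),
      mul_le_mul_of_nonneg_right hslope (sub_nonneg.2 hx)]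
  · rw [max_eq_right hle, ← log_mul_sub_log_mul_add hβ hq]
    exact objTerm_add_mul_sub_le hq.le (by linarith) (by positivity)

theorem sum_le_sum_of_add_mul_sub_le {ι : Type*} (s : Finset ι) (f : ι → ℝ → ℝ) (c : ℝ)
    (x y : ι → ℝ) (h : ∀ i ∈ s, f i (y i) + c * (x i - y i) ≤ f i (x i))
    (hxy : ∑ i ∈ s, x i = ∑ i ∈ s, y i) :
    ∑ i ∈ s, f i (y i) ≤ ∑ i ∈ s, f i (x i) :=
  calc ∑ i ∈ s, f i (y i) = ∑ i ∈ s, (f i (y i) + c * (x i - y i)) := by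
        rw [sum_add_distrib, ← mul_sum, sum_sub_distrib, hxy, sub_self, mul_zero, add_zero]
    _ ≤ ∑ i ∈ s, f i (x i) := sum_le_sum h

theorem optimal_generator_general {I : Type*} [Fintype I]
    (q t : I → ℝ) (hq : ∀ i, 0 ≤ q i) (ht : ∀ i, 0 ≤ t i)
    (Sp : ℝ → ℝ) (hSp : ∀ β : ℝ, Sp β = ∑ i, max 0 (β * q i - t i))
    (βstar : ℝ) (hβ : Sp βstar = 1)
    (pstar : I → ℝ) (hpstar : ∀ i, pstar i = max 0 (βstar * q i - t i))
    (F : (I → ℝ) → ℝ)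
    (hF : ∀ p : I → ℝ, F p =
      (∑ i, (t i + p i) * Real.log (t i + p i)) -
        ∑ i, (t i + p i + q i) * Real.log (t i + p i + q i)) :
    (∀ i, 0 ≤ pstar i) ∧ (∑ i, pstar i = 1) ∧
      ∀ p : I → ℝ, (∀ i, 0 ≤ p i) → (∑ i, p i = 1) → F pstar ≤ F p := by
  have hp0 : ∀ i, 0 ≤ pstar i := fun i => hpstar i ▸ le_max_left _ _
  have hps : ∑ i, pstar i = 1 := by
    rw [← hβ, hSp]
    exact sum_congr rfl fun i _ => hpstar i
  have hβpos : 0 < βstar := by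
    by_contra! hβle
    have hSp0 : Sp βstar = 0 := by
      rw [hSp]
      exact sum_eq_zero fun i _ => max_eq_left (by nlinarith [hq i, ht i])
    linarith
  have hmax : ∀ i, t i + pstar i = max (t i) (βstar * q i) := fun i => by
    rw [hpstar, ← max_add_add_left, add_zero, add_sub_cancel]
  have hFsum : ∀ p, F p = ∑ i, objTerm (q i) (t i + p i) := fun p => by
    rw [hF, ← sum_sub_distrib]
    rfl
  refine ⟨hp0, hps, fun p hp hsum => ?_⟩
  rw [hFsum, hFsum]
  refine sum_le_sum_of_add_mul_sub_le _ (fun i => objTerm (q i)) (log βstar - log (βstar + 1))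
    (fun i => t i + p i) (fun i => t i + pstar i) (fun i _ => ?_) ?_
  · rw [hmax]
    exact objTerm_max_add_mul_sub_le hβpos (hq i) (ht i) (le_add_of_nonneg_right (hp i))
  · simp only [sum_add_distrib, hsum, hps]

/-- Main claim of Theorem 1 (discrete form): with `β*` the unique real satisfying
`Σ max(0, β*·q i − t i) = 1`, the function `p* i = max(0, β*·q i − t i)` is a
probability mass function and minimizes
`F(p) = Σ (t i + p i)·log (t i + p i) − Σ (t i + p i + q i)·log (t i + p i + q i)`
(with the convention `0·log 0 = 0`, realized by `Real.log 0 = 0`) over all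
probability mass functions `p` on `I`. -/
theorem optimal_generator {I : Type*} [Fintype I] [Nonempty I]
    (q t : I → ℝ) (hq : ∀ i, 0 ≤ q i) (ht : ∀ i, 0 ≤ t i)
    (hqs : ∑ i, q i = 1) (hts : ∑ i, t i = 1)
    (Sp : ℝ → ℝ) (hSp : ∀ β : ℝ, Sp β = ∑ i, max 0 (β * q i - t i))
    (βstar : ℝ) (hβ : Sp βstar = 1)
    (pstar : I → ℝ) (hpstar : ∀ i, pstar i = max 0 (βstar * q i - t i))
    (F : (I → ℝ) → ℝ)
    (hF : ∀ p : I → ℝ, F p =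
      (∑ i, (t i + p i) * Real.log (t i + p i)) -
        ∑ i, (t i + p i + q i) * Real.log (t i + p i + q i)) :
    (∀ i, 0 ≤ pstar i) ∧ (∑ i, pstar i = 1) ∧
      ∀ p : I → ℝ, (∀ i, 0 ≤ p i) → (∑ i, p i = 1) → F pstar ≤ F p :=
  optimal_generator_general q t hq ht Sp hSp βstar hβ pstar hpstar F hF
end

section
/- Let I be a finite nonempty index set and let q, t : I → ℝ be probability mass functions (q i ≥ 0, t i ≥ 0 for all i, and Σ_{i∈I} q i = Σ_{i∈I} t i = 1). For β ∈ ℝ define S(β) = {i ∈ I : β·q i − t i ≥ 0}, Q(β) = Σ_{i∈S(β)} q i, T(β) = Σ_{i∈S(β)} t i, and f(β) = (1 + T(β))/Q(β). Then for every β ≥ 0 with Q(β) > 0, one has f(β) ≤ β + (2 − β)/Q(β). In particular, if Q(2) > 0 then f(2) ≤ 2, and every real β with Q(β) > 0 and β = f(β) satisfies β ≤ 2. -/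
open Real Finset

open Classical in
/-- Upper bound in the proof of Theorem 1: with `S(β) = {i : β·q i − t i ≥ 0}`,
`Q(β) = Σ_{i∈S(β)} q i`, `T(β) = Σ_{i∈S(β)} t i` and `f(β) = (1 + T(β))/Q(β)`,
for every `β ≥ 0` with `Q(β) > 0` one has `f(β) ≤ β + (2 − β)/Q(β)`; in
particular `Q(2) > 0 → f(2) ≤ 2`, and every fixed point `β = f(β)` with
`Q(β) > 0` satisfies `β ≤ 2`. -/
theorem f_le_two {I : Type*} [Fintype I] [Nonempty I]
    (q t : I → ℝ) (hq : ∀ i, 0 ≤ q i) (ht : ∀ i, 0 ≤ t i)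
    (hqs : ∑ i, q i = 1) (hts : ∑ i, t i = 1)
    (S : ℝ → Finset I) (hS : ∀ β : ℝ, S β = Finset.univ.filter (fun i => 0 ≤ β * q i - t i))
    (Q : ℝ → ℝ) (hQ : ∀ β : ℝ, Q β = ∑ i ∈ S β, q i)
    (T : ℝ → ℝ) (hT : ∀ β : ℝ, T β = ∑ i ∈ S β, t i)
    (f : ℝ → ℝ) (hf : ∀ β : ℝ, f β = (1 + T β) / Q β) :
    (∀ β : ℝ, 0 ≤ β → 0 < Q β → f β ≤ β + (2 - β) / Q β) ∧
      (0 < Q 2 → f 2 ≤ 2) ∧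
      ∀ β : ℝ, 0 < Q β → β = f β → β ≤ 2 := by
  have main : ∀ β : ℝ, 0 ≤ β → 0 < Q β → f β ≤ β + (2 - β) / Q β := by
    intro β hβ hQpos
    -- key: 1 + T β ≤ 2 - β + β * Q β
    have hsplitT : T β + ∑ i ∈ (S β)ᶜ, t i = 1 := by
      rw [hT]; rw [← hts]; exact Finset.sum_add_sum_compl _ _
    have hsplitQ : Q β + ∑ i ∈ (S β)ᶜ, q i = 1 := by
      rw [hQ]; rw [← hqs]; exact Finset.sum_add_sum_compl _ _
    have hcomp : β * ∑ i ∈ (S β)ᶜ, q i ≤ ∑ i ∈ (S β)ᶜ, t i := by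
      rw [Finset.mul_sum]
      apply Finset.sum_le_sum
      intro i hi
      rw [Finset.mem_compl, hS, Finset.mem_filter] at hi
      push_neg at hi
      have := hi (Finset.mem_univ i)
      linarith
    have hkey : 1 + T β ≤ 2 - β + β * Q β := by
      have h1 : ∑ i ∈ (S β)ᶜ, q i = 1 - Q β := by linarith
      have h2 : T β = 1 - ∑ i ∈ (S β)ᶜ, t i := by linarith
      rw [h1] at hcomp
      nlinarith
    rw [hf]
    rw [div_le_iff₀ hQpos]
    have : (β + (2 - β) / Q β) * Q β = β * Q β + (2 - β) := by
      field_simp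
    rw [this]
    linarith
  refine ⟨main, ?_, ?_⟩
  · intro h2
    have := main 2 (by norm_num) h2
    simpa using this
  · intro β hQpos hfix
    have hβnn : 0 ≤ β := by
      rw [hfix, hf]
      apply div_nonneg _ hQpos.le
      have : 0 ≤ T β := by
        rw [hT]; exact Finset.sum_nonneg fun i _ => ht i
      linarith
    have := main β hβnn hQpos
    rw [← hfix] at this
    have h0 : 0 ≤ (2 - β) / Q β := by linarith
    have h1 : 0 ≤ 2 - β := by
      have h2 := mul_nonneg h0 hQpos.le
      rwa [div_mul_cancel₀ _ hQpos.ne'] at h2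
    linarith
end

section
/- Let I be a finite nonempty index set and let q, t : I → ℝ be probability mass functions (q i ≥ 0, t i ≥ 0 for all i, and Σ_{i∈I} q i = Σ_{i∈I} t i = 1). For β ∈ ℝ define S(β) = {i ∈ I : β·q i − t i ≥ 0}, Q(β) = Σ_{i∈S(β)} q i, and Sp(β) = Σ_{i∈I} max(0, β·q i − t i). Then for all real numbers β₁, β₂ with 1 ≤ β₁ < β₂, one has Sp(β₂) − Sp(β₁) ≥ (β₂ − β₁)·Q(β₁) > 0; in particular Sp is strictly increasing on [1, ∞). -/
/-!
Raising `β` by `δ` raises each summand `max 0 (β q_i - t_i)` that is already active by `δ q_i`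
and lowers none, so `Sp` gains at least `δ Q(β)`. For `β ≥ 1` the mass `Q(β)` is positive: otherwise
the indices outside `S(β)` carry all the mass of `q`, each has `β q_i < t_i`, and summing over
them gives `β < ∑ t = 1`.
-/

open Finset

section PositivePartSums

variable {ι : Type*} (s : Finset ι) (q t : ι → ℝ)

theorem max_zero_sub_mono {a b : ℝ} (hab : a ≤ b) {x y : ℝ} (hx : 0 ≤ x) :
    max 0 (a * x - y) ≤ max 0 (b * x - y) :=
  max_le_max le_rfl (sub_le_sub_right (mul_le_mul_of_nonneg_right hab hx) y)

theorem mul_le_max_zero_sub_sub {a b x y : ℝ} (hact : 0 ≤ a * x - y) :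
    (b - a) * x ≤ max 0 (b * x - y) - max 0 (a * x - y) := by
  rw [max_eq_right hact]
  linarith [le_max_right 0 (b * x - y)]

theorem mul_sum_filter_le_sum_max_zero_sub {a b : ℝ} (hab : a ≤ b) (hq : ∀ i ∈ s, 0 ≤ q i) :
    (b - a) * ∑ i ∈ s.filter (fun i => 0 ≤ a * q i - t i), q i ≤
      ∑ i ∈ s, max 0 (b * q i - t i) - ∑ i ∈ s, max 0 (a * q i - t i) := by
  rw [mul_sum, ← sum_sub_distrib]
  calc ∑ i ∈ s.filter (fun i => 0 ≤ a * q i - t i), (b - a) * q i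
      ≤ ∑ i ∈ s.filter (fun i => 0 ≤ a * q i - t i),
          (max 0 (b * q i - t i) - max 0 (a * q i - t i)) :=
        sum_le_sum fun i hi => mul_le_max_zero_sub_sub (mem_filter.1 hi).2
    _ ≤ ∑ i ∈ s, (max 0 (b * q i - t i) - max 0 (a * q i - t i)) :=
        sum_le_sum_of_subset_of_nonneg (filter_subset _ s) fun i hi _ =>
          sub_nonneg.2 (max_zero_sub_mono hab (hq i hi))

theorem sum_filter_pos_of_sum_le_mul_sum {β : ℝ} (hq : ∀ i ∈ s, 0 ≤ q i)
    (ht : ∀ i ∈ s, 0 ≤ t i) (hq_pos : 0 < ∑ i ∈ s, q i)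
    (ht_le : ∑ i ∈ s, t i ≤ β * ∑ i ∈ s, q i) :
    0 < ∑ i ∈ s.filter (fun i => 0 ≤ β * q i - t i), q i := by
  by_contra! h
  set p : ι → Prop := fun i => 0 ≤ β * q i - t i
  have hzero : ∑ i ∈ s.filter p, q i = 0 :=
    le_antisymm h (sum_nonneg fun i hi => hq i (mem_filter.1 hi).1)
  have hrest : ∑ i ∈ s.filter (¬p ·), q i = ∑ i ∈ s, q i := by
    rw [← sum_filter_add_sum_filter_not s p q, hzero, zero_add]
  have hne : (s.filter (¬p ·)).Nonempty :=
    nonempty_of_sum_ne_zero (hrest ▸ hq_pos.ne')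
  have hlt : ∑ i ∈ s.filter (¬p ·), β * q i < ∑ i ∈ s.filter (¬p ·), t i :=
    sum_lt_sum_of_nonempty hne fun i hi => by
      simpa only [p, sub_nonneg, not_le] using (mem_filter.1 hi).2
  have ht_rest : ∑ i ∈ s.filter (¬p ·), t i ≤ ∑ i ∈ s, t i :=
    sum_le_sum_of_subset_of_nonneg (filter_subset _ s) fun i hi _ => ht i hi
  rw [← mul_sum, hrest] at hlt
  linarith

end PositivePartSums

open Classical in
theorem Sp_strict_mono_general {I : Type*} [Fintype I]
    (q t : I → ℝ) (hq : ∀ i, 0 ≤ q i) (ht : ∀ i, 0 ≤ t i)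
    (hqs : ∑ i, q i = 1) (hts : ∑ i, t i = 1)
    (S : ℝ → Finset I) (hS : ∀ β : ℝ, S β = Finset.univ.filter (fun i => 0 ≤ β * q i - t i))
    (Q : ℝ → ℝ) (hQ : ∀ β : ℝ, Q β = ∑ i ∈ S β, q i)
    (Sp : ℝ → ℝ) (hSp : ∀ β : ℝ, Sp β = ∑ i, max 0 (β * q i - t i)) :
    (∀ β₁ β₂ : ℝ, 1 ≤ β₁ → β₁ < β₂ →
      Sp β₂ - Sp β₁ ≥ (β₂ - β₁) * Q β₁ ∧ 0 < (β₂ - β₁) * Q β₁) ∧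
      StrictMonoOn Sp (Set.Ici 1) := by
  have key : ∀ β₁ β₂ : ℝ, 1 ≤ β₁ → β₁ < β₂ →
      Sp β₂ - Sp β₁ ≥ (β₂ - β₁) * Q β₁ ∧ 0 < (β₂ - β₁) * Q β₁ := by
    intro β₁ β₂ h1 h12
    rw [hSp, hSp, hQ, hS]
    have hQ_pos := sum_filter_pos_of_sum_le_mul_sum univ q t (β := β₁) (fun i _ => hq i)
      (fun i _ => ht i) (by rw [hqs]; exact one_pos) (by rw [hqs, hts, mul_one]; exact h1)
    exact ⟨mul_sum_filter_le_sum_max_zero_sub univ q t h12.le fun i _ => hq i,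
      mul_pos (sub_pos.2 h12) hQ_pos⟩
  refine ⟨key, fun β₁ h1 β₂ _ h12 => ?_⟩
  obtain ⟨hgain, hpos⟩ := key β₁ β₂ h1 h12
  linarith

open Classical in
/-- Strict monotonicity of `Sp` on `[1, ∞)`: for `1 ≤ β₁ < β₂`,
`Sp(β₂) − Sp(β₁) ≥ (β₂ − β₁)·Q(β₁) > 0`, where `Q(β) = Σ_{i∈S(β)} q i` and
`S(β) = {i : β·q i − t i ≥ 0}`; in particular `Sp` is strictly increasing
on `[1, ∞)`. -/
theorem Sp_strict_mono {I : Type*} [Fintype I] [Nonempty I]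
    (q t : I → ℝ) (hq : ∀ i, 0 ≤ q i) (ht : ∀ i, 0 ≤ t i)
    (hqs : ∑ i, q i = 1) (hts : ∑ i, t i = 1)
    (S : ℝ → Finset I) (hS : ∀ β : ℝ, S β = Finset.univ.filter (fun i => 0 ≤ β * q i - t i))
    (Q : ℝ → ℝ) (hQ : ∀ β : ℝ, Q β = ∑ i ∈ S β, q i)
    (Sp : ℝ → ℝ) (hSp : ∀ β : ℝ, Sp β = ∑ i, max 0 (β * q i - t i)) :
    (∀ β₁ β₂ : ℝ, 1 ≤ β₁ → β₁ < β₂ →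
      Sp β₂ - Sp β₁ ≥ (β₂ - β₁) * Q β₁ ∧ 0 < (β₂ - β₁) * Q β₁) ∧
      StrictMonoOn Sp (Set.Ici 1) :=
  Sp_strict_mono_general q t hq ht hqs hts S hS Q hQ Sp hSp
end

section
/- Let I be a finite nonempty index set and let q, t : I → ℝ be probability mass functions (q i ≥ 0, t i ≥ 0 for all i, and Σ_{i∈I} q i = Σ_{i∈I} t i = 1). Define Sp(β) = Σ_{i∈I} max(0, β·q i − t i) for β ∈ ℝ, and let β* be the unique real number with Sp(β*) = 1. Then β* = 1 if and only if q i · t i = 0 for all i ∈ I (i.e., the supports of q and t do not overlap). -/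
/-!
`Sp` is nondecreasing, and strictly increasing wherever it is positive, so `Sp β = 1` has at most
one solution and `β* = 1` amounts to `Sp 1 = 1`. Termwise `max 0 (q i - t i) ≤ q i`, with equality
exactly when `q i * t i = 0`; since `∑ q i = 1`, `Sp 1 = 1` says that all these inequalities are
equalities.
-/

open Finset

lemma max_zero_sub_le_self {a b : ℝ} (ha : 0 ≤ a) (hb : 0 ≤ b) : max 0 (a - b) ≤ a :=
  max_le ha (by linarith)

lemma max_zero_sub_eq_self_iff {a b : ℝ} (ha : 0 ≤ a) (hb : 0 ≤ b) :
    max 0 (a - b) = a ↔ a * b = 0 := by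
  rcases ha.eq_or_lt with rfl | ha' <;> rcases hb.eq_or_lt with rfl | hb'
  · simp
  · simp [hb]
  · simp [ha'.le]
  · have : max 0 (a - b) < a := max_lt ha' (by linarith)
    simp only [this.ne, false_iff]
    positivity

lemma max_zero_mul_sub_mono {q t a b : ℝ} (hq : 0 ≤ q) (hab : a ≤ b) :
    max 0 (a * q - t) ≤ max 0 (b * q - t) :=
  max_le_max_left 0 (sub_le_sub_right (mul_le_mul_of_nonneg_right hab hq) _)

section PositivePart

variable {I : Type*} [Fintype I] {q t : I → ℝ}

lemma sum_max_zero_mul_sub_lt_of_lt (hq : ∀ i, 0 ≤ q i) (ht : ∀ i, 0 ≤ t i) {a b : ℝ}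
    (hab : a < b) (hpos : 0 < ∑ i, max 0 (a * q i - t i)) :
    ∑ i, max 0 (a * q i - t i) < ∑ i, max 0 (b * q i - t i) := by
  obtain ⟨i, -, hi⟩ := exists_lt_of_sum_lt (s := univ) (f := fun _ ↦ (0 : ℝ)) (by simpa using hpos)
  have hai : 0 < a * q i - t i := by simpa using hi
  have hqi : 0 < q i := by
    by_contra! h
    have : q i = 0 := le_antisymm h (hq i)
    linarith [ht i, this ▸ hai]
  refine sum_lt_sum (fun j _ ↦ max_zero_mul_sub_mono (hq j) hab.le) ⟨i, mem_univ i, ?_⟩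
  rw [max_eq_right hai.le]
  exact lt_max_of_lt_right (by nlinarith)

lemma eq_of_sum_max_zero_mul_sub_eq_one (hq : ∀ i, 0 ≤ q i) (ht : ∀ i, 0 ≤ t i) {a b : ℝ}
    (ha : ∑ i, max 0 (a * q i - t i) = 1) (hb : ∑ i, max 0 (b * q i - t i) = 1) : a = b := by
  rcases lt_trichotomy a b with hab | hab | hab
  · linarith [sum_max_zero_mul_sub_lt_of_lt hq ht hab (by linarith)]
  · exact hab
  · linarith [sum_max_zero_mul_sub_lt_of_lt hq ht hab (by linarith)]

lemma sum_max_zero_sub_eq_sum_iff (hq : ∀ i, 0 ≤ q i) (ht : ∀ i, 0 ≤ t i) :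
    ∑ i, max 0 (q i - t i) = ∑ i, q i ↔ ∀ i, q i * t i = 0 := by
  rw [sum_eq_sum_iff_of_le fun i _ ↦ max_zero_sub_le_self (hq i) (ht i)]
  simp [max_zero_sub_eq_self_iff (hq _) (ht _)]

end PositivePart

theorem beta_eq_one_iff_general {I : Type*} [Fintype I]
    (q t : I → ℝ) (hq : ∀ i, 0 ≤ q i) (ht : ∀ i, 0 ≤ t i)
    (hqs : ∑ i, q i = 1)
    (Sp : ℝ → ℝ) (hSp : ∀ β : ℝ, Sp β = ∑ i, max 0 (β * q i - t i))
    (βstar : ℝ) (hβ : Sp βstar = 1) :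
    βstar = 1 ↔ ∀ i, q i * t i = 0 := by
  have hSp_one : Sp 1 = 1 ↔ ∀ i, q i * t i = 0 := by
    simpa [hSp, hqs] using sum_max_zero_sub_eq_sum_iff hq ht
  rw [← hSp_one]
  constructor
  · rintro rfl
    exact hβ
  · intro h1
    rw [hSp] at hβ h1
    exact eq_of_sum_max_zero_mul_sub_eq_one hq ht hβ h1

/-- Characterization of `β* = 1` in Theorem 1: for `β*` the unique real with
`Sp(β*) = Σ max(0, β*·q i − t i) = 1`, one has `β* = 1` iff `q i · t i = 0` for
all `i`, i.e. the supports of `q` and `t` are disjoint. -/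
theorem beta_eq_one_iff {I : Type*} [Fintype I] [Nonempty I]
    (q t : I → ℝ) (hq : ∀ i, 0 ≤ q i) (ht : ∀ i, 0 ≤ t i)
    (hqs : ∑ i, q i = 1) (hts : ∑ i, t i = 1)
    (Sp : ℝ → ℝ) (hSp : ∀ β : ℝ, Sp β = ∑ i, max 0 (β * q i - t i))
    (βstar : ℝ) (hβ : Sp βstar = 1) :
    βstar = 1 ↔ ∀ i, q i * t i = 0 :=
  beta_eq_one_iff_general q t hq ht hqs Sp hSp βstar hβ
end

section
/- Let I be a finite nonempty index set and let q, t : I → ℝ be probability mass functions (q i ≥ 0, t i ≥ 0 for all i, and Σ_{i∈I} q i = Σ_{i∈I} t i = 1). Define Sp(β) = Σ_{i∈I} max(0, β·q i − t i) for β ∈ ℝ, and let β* be the unique real number with Sp(β*) = 1. Then β* = 2 if and only if 2·q i − t i ≥ 0 for all i ∈ I. -/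
/-!
Since `∑ (β q i - t i) = β - 1`, we have `β - 1 ≤ Sp β`, so `Sp β* = 1` forces `β* ≤ 2`, and
`Sp 2 = 1` exactly when no term `2 q i - t i` is clipped by the `max`. Conversely, if every
`2 q i - t i` is nonnegative, then `β ↦ max 0 (β q i - t i)` is convex and vanishes at `0`, so it
lies below the chord `(β / 2) (2 q i - t i)` on `[0, 2]`; summing gives `Sp β ≤ max 0 (β / 2)`
for `β ≤ 2`, and `Sp β* = 1` forces `β* ≥ 2`.
-/

open Finset

lemma max_zero_mul_sub_le_of_le_two {β q t : ℝ} (ht : 0 ≤ t) (h2 : 0 ≤ 2 * q - t) (hβ : β ≤ 2) :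
    max 0 (β * q - t) ≤ max 0 (β / 2) * (2 * q - t) := by
  rcases le_or_gt β 0 with hβ0 | hβ0
  · rw [max_eq_left (by linarith : β / 2 ≤ 0), zero_mul]
    exact max_le le_rfl (by nlinarith)
  · rw [max_eq_right (by linarith : 0 ≤ β / 2)]
    exact max_le (by positivity) (by nlinarith)

lemma forall_nonneg_of_sum_max_zero_eq_sum {ι : Type*} (s : Finset ι) (f : ι → ℝ)
    (h : ∑ i ∈ s, max 0 (f i) = ∑ i ∈ s, f i) : ∀ i ∈ s, 0 ≤ f i := by
  intro i hi
  rw [(sum_eq_sum_iff_of_le fun j _ => le_max_right 0 (f j)).mp h.symm i hi]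
  exact le_max_left _ _

section

variable {ι : Type*} [Fintype ι] {q t : ι → ℝ}

lemma sum_mul_sub_eq_sub_one (hqs : ∑ i, q i = 1) (hts : ∑ i, t i = 1) (β : ℝ) :
    ∑ i, (β * q i - t i) = β - 1 := by
  rw [sum_sub_distrib, ← mul_sum, hqs, hts, mul_one]

lemma sub_one_le_sum_max_zero (hqs : ∑ i, q i = 1) (hts : ∑ i, t i = 1) (β : ℝ) :
    β - 1 ≤ ∑ i, max 0 (β * q i - t i) :=
  sum_mul_sub_eq_sub_one hqs hts β ▸ sum_le_sum fun _ _ => le_max_right _ _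

lemma sum_max_zero_le_of_le_two (hqs : ∑ i, q i = 1) (hts : ∑ i, t i = 1)
    (ht : ∀ i, 0 ≤ t i) (h2 : ∀ i, 0 ≤ 2 * q i - t i) {β : ℝ} (hβ : β ≤ 2) :
    ∑ i, max 0 (β * q i - t i) ≤ max 0 (β / 2) :=
  calc ∑ i, max 0 (β * q i - t i)
      ≤ ∑ i, max 0 (β / 2) * (2 * q i - t i) :=
        sum_le_sum fun i _ => max_zero_mul_sub_le_of_le_two (ht i) (h2 i) hβ
    _ = max 0 (β / 2) := by
        rw [← mul_sum, sum_mul_sub_eq_sub_one hqs hts]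
        ring

end

theorem beta_eq_two_iff_general {I : Type*} [Fintype I]
    (q t : I → ℝ) (ht : ∀ i, 0 ≤ t i)
    (hqs : ∑ i, q i = 1) (hts : ∑ i, t i = 1)
    (Sp : ℝ → ℝ) (hSp : ∀ β : ℝ, Sp β = ∑ i, max 0 (β * q i - t i))
    (βstar : ℝ) (hβ : Sp βstar = 1) :
    βstar = 2 ↔ ∀ i, 0 ≤ 2 * q i - t i := by
  have hβle : βstar ≤ 2 := by
    linarith [sub_one_le_sum_max_zero hqs hts βstar, hSp βstar]
  constructor
  · rintro rfl i
    refine forall_nonneg_of_sum_max_zero_eq_sum univ (fun i => 2 * q i - t i) ?_ i (mem_univ i)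
    rw [← hSp, hβ, sum_mul_sub_eq_sub_one hqs hts]
    norm_num
  · intro h2
    have hβge : 1 ≤ max 0 (βstar / 2) :=
      hβ ▸ hSp βstar ▸ sum_max_zero_le_of_le_two hqs hts ht h2 hβle
    rcases le_max_iff.mp hβge with h | h <;> linarith

/-- Characterization of `β* = 2` in Theorem 1: for `β*` the unique real with
`Sp(β*) = Σ max(0, β*·q i − t i) = 1`, one has `β* = 2` iff `2·q i − t i ≥ 0`
for all `i`. -/
theorem beta_eq_two_iff {I : Type*} [Fintype I] [Nonempty I]
    (q t : I → ℝ) (hq : ∀ i, 0 ≤ q i) (ht : ∀ i, 0 ≤ t i)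
    (hqs : ∑ i, q i = 1) (hts : ∑ i, t i = 1)
    (Sp : ℝ → ℝ) (hSp : ∀ β : ℝ, Sp β = ∑ i, max 0 (β * q i - t i))
    (βstar : ℝ) (hβ : Sp βstar = 1) :
    βstar = 2 ↔ ∀ i, 0 ≤ 2 * q i - t i :=
  beta_eq_two_iff_general q t ht hqs hts Sp hSp βstar hβ
end
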